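/- Let T₂ : (ℂ \ {0})³ → (ℂ \ {0})³ be the map T₂(x,y,z) = (x·y·z⁻¹, z, y), and let P(x,y,z) be the antisymmetric 3×3 matrix with entries P₁₂ = −(1/2)·(y − z)·z, P₁₃ = (1/2)·(y − z)·z, P₂₃ = 0 (and Pⱼᵢ = −Pᵢⱼ, Pᵢᵢ = 0). Let J(x,y,z) denote the Jacobian matrix of T₂, namely J = [[y·z⁻¹, x·z⁻¹, −x·y·z⁻²],[0,0,1],[0,1,0]]. Then the Poisson structure defined by P is invariant under T₂: for all (x,y,z) ∈ (ℂ \ {0})³, J(x,y,z) · P(x,y,z) · J(x,y,z)ᵀ = P(T₂(x,y,z)). Moreover C̃₁(x,y,z) = y + z satisfies C̃₁ ∘ T₂ = C̃₁ and is a Casimir of P (its gradient lies in the kernel of P at every point), and Ĩ₁(x,y,z) = z⁻¹·x satisfies Ĩ₁ ∘ T₂ = Ĩ₁. -/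

import Mathlib

noncomputable section

section Tetra

variable {X : Type*}

/-- `T` acting on factors 1,2,3 of `X⁶`. -/
def lift123 (T : X × X × X → X × X × X) :
    X × X × X × X × X × X → X × X × X × X × X × X
  | (a, b, c, d, e, f) =>
    match T (a, b, c) with
    | (a', b', c') => (a', b', c', d, e, f)

/-- `T` acting on factors 1,4,5 of `X⁶`. -/
def lift145 (T : X × X × X → X × X × X) :
    X × X × X × X × X × X → X × X × X × X × X × X
  | (a, b, c, d, e, f) =>
    match T (a, d, e) with
    | (a', d', e') => (a', b, c, d', e', f)

/-- `T` acting on factors 2,4,6 of `X⁶`. -/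
def lift246 (T : X × X × X → X × X × X) :
    X × X × X × X × X × X → X × X × X × X × X × X
  | (a, b, c, d, e, f) =>
    match T (b, d, f) with
    | (b', d', f') => (a, b', c, d', e, f')

/-- `T` acting on factors 3,5,6 of `X⁶`. -/
def lift356 (T : X × X × X → X × X × X) :
    X × X × X × X × X × X → X × X × X × X × X × X
  | (a, b, c, d, e, f) =>
    match T (c, e, f) with
    | (c', e', f') => (a, b, c', d, e', f')

/-- The Zamolodchikov tetrahedron equation for a map `T : X³ → X³`. -/
def IsTetrahedronMap (T : X × X × X → X × X × X) : Prop :=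
  lift123 T ∘ lift145 T ∘ lift246 T ∘ lift356 T =
    lift356 T ∘ lift246 T ∘ lift145 T ∘ lift123 T

end Tetra

open Matrix

def T2 : ℂˣ × ℂˣ × ℂˣ → ℂˣ × ℂˣ × ℂˣ := fun (x, y, z) => (x * y * z⁻¹, z, y)

/-- The antisymmetric Poisson structure matrix with
`P₁₂ = −(1/2)·(y − z)·z`, `P₁₃ = (1/2)·(y − z)·z`, `P₂₃ = 0`. -/
def P (_x y z : ℂ) : Matrix (Fin 3) (Fin 3) ℂ :=
  !![0, -((1/2) * (y - z) * z), (1/2) * (y - z) * z;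
     (1/2) * (y - z) * z, 0, 0;
     -((1/2) * (y - z) * z), 0, 0]

/-- The Jacobian matrix of `T₂(x,y,z) = (x·y·z⁻¹, z, y)`. -/
def J (x y z : ℂ) : Matrix (Fin 3) (Fin 3) ℂ :=
  !![y / z, x / z, -(x * y / z ^ 2);
     0, 0, 1;
     0, 1, 0]

/-- `C̃₁(x,y,z) = y + z`. -/
def C1t : ℂˣ × ℂˣ × ℂˣ → ℂ := fun (_, y, z) => (y : ℂ) + (z : ℂ)

/-- `Ĩ₁(x,y,z) = z⁻¹·x`. -/
def I1t : ℂˣ × ℂˣ × ℂˣ → ℂ := fun (x, _, z) => (z : ℂ)⁻¹ * (x : ℂ)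

/-!
`P` is the decomposable bivector `f · e₁ ∧ (e₃ - e₂)` with `f = (y - z) z / 2`, and
`J (a ∧ b) Jᵀ = Ja ∧ Jb`. Since `J e₁ = (y/z) e₁` and `J (e₃ - e₂) ≡ -(e₃ - e₂)` modulo `e₁`,
the congruence multiplies `f` by `-y/z`, which turns it into the coefficient `(z - y) y / 2`
of `P` at `T₂(x,y,z)`. The gradient `(0,1,1)` of `C̃₁` is orthogonal to both `e₁` and `e₃ - e₂`,
so it lies in the kernel of `P`.
-/

namespace Matrix

variable {n R : Type*} [CommRing R]

def wedge (a b : n → R) : Matrix n n R := vecMulVec a b - vecMulVec b a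

theorem mul_wedge_mul_transpose [Fintype n] (A : Matrix n n R) (a b : n → R) :
    A * wedge a b * Aᵀ = wedge (A *ᵥ a) (A *ᵥ b) := by
  simp only [wedge, Matrix.mul_sub, Matrix.sub_mul, mul_vecMulVec, vecMulVec_mul, vecMul_transpose]

theorem wedge_mulVec [Fintype n] (a b v : n → R) :
    wedge a b *ᵥ v = (b ⬝ᵥ v) • a - (a ⬝ᵥ v) • b := by
  simp only [wedge, sub_mulVec, vecMulVec_mulVec, op_smul_eq_smul]

theorem wedge_smul_smul_add_smul (s t c : R) (a b : n → R) :
    wedge (s • a) (t • b + c • a) = (s * t) • wedge a b := by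
  ext i j
  simp only [wedge, sub_apply, smul_apply, vecMulVec_apply, Pi.add_apply, Pi.smul_apply,
    smul_eq_mul]
  ring

end Matrix

open Matrix

theorem P_eq_smul_wedge (x y z : ℂ) :
    P x y z = ((1/2) * (y - z) * z) • wedge ![1, 0, 0] ![0, -1, 1] := by
  ext i j
  fin_cases i <;> fin_cases j <;> simp [_root_.P, wedge]

theorem J_mulVec_e₁ (x y z : ℂ) : J x y z *ᵥ ![1, 0, 0] = (y / z) • ![1, 0, 0] := by
  ext i
  fin_cases i <;> simp [_root_.J, mulVec, dotProduct, Fin.sum_univ_three]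

theorem J_mulVec_e₃_sub_e₂ (x y z : ℂ) :
    J x y z *ᵥ ![0, -1, 1] = (-1 : ℂ) • ![0, -1, 1] + (-(x / z) - x * y / z ^ 2) • ![1, 0, 0] := by
  ext i
  fin_cases i <;> simp [_root_.J, mulVec, dotProduct, Fin.sum_univ_three]
  ring

theorem J_mul_P_mul_J_transpose {z : ℂ} (hz : z ≠ 0) (x y : ℂ) :
    J x y z * P x y z * (J x y z)ᵀ = P (x * y * z⁻¹) z y := by
  rw [P_eq_smul_wedge, P_eq_smul_wedge, Matrix.mul_smul, Matrix.smul_mul, mul_wedge_mul_transpose,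
    J_mulVec_e₁, J_mulVec_e₃_sub_e₂, wedge_smul_smul_add_smul, smul_smul]
  congr 1
  field_simp
  ring

theorem P_mulVec_eq_zero (x y z : ℂ) : P x y z *ᵥ ![0, 1, 1] = 0 := by
  rw [P_eq_smul_wedge, smul_mulVec, wedge_mulVec]
  simp [dotProduct, Fin.sum_univ_three]

theorem C1t_comp_T2 : C1t ∘ T2 = C1t := by
  funext ⟨x, y, z⟩
  simp [C1t, T2, add_comm]

theorem I1t_comp_T2 : I1t ∘ T2 = I1t := by
  funext ⟨x, y, z⟩
  simp only [Function.comp_apply, I1t, T2, Units.val_mul, Units.val_inv_eq_inv_val]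
  field_simp

theorem T2_Liouville_data :
    (∀ x y z : ℂˣ,
      J (x : ℂ) (y : ℂ) (z : ℂ) * P (x : ℂ) (y : ℂ) (z : ℂ) *
          (J (x : ℂ) (y : ℂ) (z : ℂ))ᵀ =
        P (((x * y * z⁻¹ : ℂˣ)) : ℂ) ((z : ℂˣ) : ℂ) ((y : ℂˣ) : ℂ)) ∧
    (C1t ∘ T2 = C1t) ∧
    (∀ x y z : ℂˣ, P (x : ℂ) (y : ℂ) (z : ℂ) *ᵥ ![0, 1, 1] = 0) ∧
    (I1t ∘ T2 = I1t) := by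
  refine ⟨fun x y z => ?_, C1t_comp_T2, fun x y z => P_mulVec_eq_zero x y z, I1t_comp_T2⟩
  rw [Units.val_mul, Units.val_mul, Units.val_inv_eq_inv_val]
  exact J_mul_P_mul_J_transpose z.ne_zero x y
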